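/- arXiv:2203.05073 — 4 statements merged into one kernel-verified Lean document; each statement's English description precedes it below -/
import Mathlib

section
/- If X₁, X₂ are real 2×2 matrices with determinant 1 that have the same value of x = (trace)/2 and the same value of y = (X₁₂ − X₂₁)/2, then there exists K ∈ SO(2) with K X₁ Kᵀ = X₂. -/
open Matrix

lemma circle_aux (m₁ k₁ m₂ k₂ : ℝ) (h : m₁^2 + k₁^2 = m₂^2 + k₂^2) :
    ∃ c s : ℝ, c^2 + s^2 = 1 ∧ c*(m₁-m₂) + s*(k₁+k₂) = 0 ∧ c*(k₁-k₂) - s*(m₁+m₂) = 0 := by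
  by_cases hN : (k₁+k₂)^2 + (m₁-m₂)^2 = 0
  · have h1 : (k₁+k₂)^2 = 0 := by nlinarith [sq_nonneg (m₁-m₂)]
    have h2 : (m₁-m₂)^2 = 0 := by nlinarith [sq_nonneg (k₁+k₂)]
    have hk : k₂ = -k₁ := by have := sq_eq_zero_iff.mp h1; linarith
    have hm : m₂ = m₁ := by have := sq_eq_zero_iff.mp h2; linarith
    by_cases hM : m₁^2 + k₁^2 = 0
    · have h3 : m₁ = 0 := by nlinarith [sq_nonneg m₁, sq_nonneg k₁]
      have h4 : k₁ = 0 := by nlinarith [sq_nonneg m₁, sq_nonneg k₁]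
      exact ⟨1, 0, by ring, by rw [hk, hm]; ring, by rw [hk, hm, h3, h4]; ring⟩
    · have hMpos : 0 < m₁^2 + k₁^2 := lt_of_le_of_ne (by positivity) (Ne.symm hM)
      set r := Real.sqrt (m₁^2 + k₁^2) with hrdef
      have hr : r^2 = m₁^2 + k₁^2 := Real.sq_sqrt (le_of_lt hMpos)
      have hrpos : 0 < r := Real.sqrt_pos.mpr hMpos
      refine ⟨m₁/r, k₁/r, ?_, ?_, ?_⟩
      · field_simp
        linarith [hr]
      · rw [hk, hm]; ring
      · rw [hk, hm]; field_simp; ring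
  · have hNpos : 0 < (k₁+k₂)^2 + (m₁-m₂)^2 := lt_of_le_of_ne (by positivity) (Ne.symm hN)
    set r := Real.sqrt ((k₁+k₂)^2 + (m₁-m₂)^2) with hrdef
    have hr : r^2 = (k₁+k₂)^2 + (m₁-m₂)^2 := Real.sq_sqrt (le_of_lt hNpos)
    have hrpos : 0 < r := Real.sqrt_pos.mpr hNpos
    refine ⟨(k₁+k₂)/r, -(m₁-m₂)/r, ?_, ?_, ?_⟩
    · field_simp
      linarith [hr]
    · field_simp; ring
    · field_simp; linear_combination h

theorem stmt_1 (X₁ X₂ : Matrix (Fin 2) (Fin 2) ℝ)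
    (h1 : X₁.det = 1) (h2 : X₂.det = 1)
    (hx : (X₁ 0 0 + X₁ 1 1) / 2 = (X₂ 0 0 + X₂ 1 1) / 2)
    (hy : (X₁ 0 1 - X₁ 1 0) / 2 = (X₂ 0 1 - X₂ 1 0) / 2) :
    ∃ K : Matrix (Fin 2) (Fin 2) ℝ, K * Kᵀ = 1 ∧ K.det = 1 ∧ K * X₁ * Kᵀ = X₂ := by
  rw [Matrix.det_fin_two] at h1 h2
  obtain ⟨c, s, hcs, e1, e2⟩ := circle_aux ((X₁ 0 0 - X₁ 1 1)/2) ((X₁ 0 1 + X₁ 1 0)/2)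
      ((X₂ 0 0 - X₂ 1 1)/2) ((X₂ 0 1 + X₂ 1 0)/2)
      (by linear_combination ((X₁ 0 0 + X₁ 1 1)/2 + (X₂ 0 0 + X₂ 1 1)/2) * hx
            + ((X₁ 0 1 - X₁ 1 0)/2 + (X₂ 0 1 - X₂ 1 0)/2) * hy - h1 + h2)
  refine ⟨!![c, s; -s, c], ?_, ?_, ?_⟩
  · ext i j
    fin_cases i <;> fin_cases j <;>
      simp [Matrix.mul_apply, Fin.sum_univ_two, Matrix.transpose] <;> linarith [hcs]
  · rw [Matrix.det_fin_two_of]; linear_combination hcs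
  · have hK1 : !![c, s; -s, c] * !![c, s; -s, c]ᵀ = 1 := by
      ext i j
      fin_cases i <;> fin_cases j <;>
        simp [Matrix.mul_apply, Fin.sum_univ_two, Matrix.transpose] <;> linarith [hcs]
    have hKX : !![c, s; -s, c] * X₁ = X₂ * !![c, s; -s, c] := by
      ext i j
      fin_cases i <;> fin_cases j <;>
        simp [Matrix.mul_apply, Fin.sum_univ_two]
      · linear_combination e1 + c * hx - s * hy
      · linear_combination e2 + s * hx + c * hy
      · linear_combination e2 - s * hx - c * hy
      · linear_combination -e1 + c * hx - s * hy
    calc !![c, s; -s, c] * X₁ * !![c, s; -s, c]ᵀ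
        = X₂ * (!![c, s; -s, c] * !![c, s; -s, c]ᵀ) := by rw [hKX, Matrix.mul_assoc]
      _ = X₂ := by rw [hK1, Matrix.mul_one]
end

section
/- Let X ∈ SL(2,ℝ) satisfy x² + y² > 1, where x = (tr X)/2 and y = (X₁₂ − X₂₁)/2. If K ∈ SO(2) satisfies K X Kᵀ = X, then K = I or K = −I. -/
open Matrix

theorem stmt_3 (X K : Matrix (Fin 2) (Fin 2) ℝ)
    (hX : X.det = 1)
    (hreg : ((X 0 0 + X 1 1) / 2) ^ 2 + ((X 0 1 - X 1 0) / 2) ^ 2 > 1)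
    (hK : K * Kᵀ = 1) (hdK : K.det = 1)
    (hfix : K * X * Kᵀ = X) :
    K = 1 ∨ K = -1 := by
  set a := K 0 0 with ha
  set b := K 0 1 with hb
  set c := K 1 0 with hc
  set d := K 1 1 with hd
  set p := X 0 0 with hp
  set q := X 0 1 with hq
  set r := X 1 0 with hr
  set s := X 1 1 with hs
  have h00 := congrFun (congrFun hK 0) 0
  have h01 := congrFun (congrFun hK 0) 1
  have h11 := congrFun (congrFun hK 1) 1
  have f00 := congrFun (congrFun hfix 0) 0
  have f01 := congrFun (congrFun hfix 0) 1
  simp [Matrix.mul_apply, Fin.sum_univ_two, Matrix.one_apply] at h00 h01 h11 f00 f01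
  rw [Matrix.det_fin_two] at hdK hX
  simp only [← ha, ← hb, ← hc, ← hd, ← hp, ← hq, ← hr, ← hs] at h00 h01 h11 f00 f01 hdK hX
  have hda : d = a := by nlinarith [sq_nonneg (a - d), sq_nonneg (b + c)]
  have hcb : c = -b := by nlinarith [sq_nonneg (a - d), sq_nonneg (b + c)]
  rw [hda, hcb] at f01
  have hKent : K = Matrix.of ![![a, b], ![c, d]] := by
    ext i j
    fin_cases i <;> fin_cases j <;> simp [← ha, ← hb, ← hc, ← hd]
  clear_value a b c d p q r s
  clear hK hfix ha hb hc hd hp hq hr hs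
  -- equations: b²(s-p) + ab(q+r) = 0 and -b²(q+r) + ab(s-p) = 0
  have e1 : b * (b * (s - p) + a * (q + r)) = 0 := by linear_combination f00 - p * h00
  have e2 : b * (a * (s - p) - b * (q + r)) = 0 := by linear_combination f01 - q * h00
  have hb0 : b = 0 := by
    by_contra hbne
    have k1 : b * (s - p) + a * (q + r) = 0 := by
      rcases mul_eq_zero.mp e1 with h | h
      · exact absurd h hbne
      · exact h
    have k2 : a * (s - p) - b * (q + r) = 0 := by
      rcases mul_eq_zero.mp e2 with h | h
      · exact absurd h hbne
      · exact h
    have hu : s - p = 0 := by linear_combination b * k1 + a * k2 - (s - p) * h00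
    have hv : q + r = 0 := by linear_combination a * k1 - b * k2 - (q + r) * h00
    have key : p ^ 2 + q ^ 2 = 1 := by linear_combination hX - p * hu + q * hv
    have hs2 : s = p := by linarith
    have hr2 : r = -q := by linarith
    rw [hs2, hr2] at hreg
    have : ((p + p) / 2) ^ 2 + ((q - -q) / 2) ^ 2 = p ^ 2 + q ^ 2 := by ring
    rw [this, key] at hreg
    exact lt_irrefl 1 hreg
  have ha1 : (a - 1) * (a + 1) = 0 := by nlinarith [h00]
  have fin : ∀ x : ℝ, a = x → K = Matrix.of ![![x, 0], ![0, x]] := by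
    intro x hx
    rw [hKent, hda, hcb, hb0, hx]
    norm_num
  rcases mul_eq_zero.mp ha1 with h | h
  · left
    rw [fin 1 (by linarith)]
    ext i j; fin_cases i <;> fin_cases j <;> simp [Matrix.one_apply]
  · right
    rw [fin (-1) (by linarith)]
    ext i j; fin_cases i <;> fin_cases j <;> simp [Matrix.one_apply]
end

section
/- A matrix X ∈ SL(2,ℝ) is conjugate to its inverse via an element of SO(2) (i.e., there exists K ∈ SO(2) with KXKᵀ = X⁻¹) if and only if X is symmetric. -/
open Matrix

theorem stmt_4 (X : Matrix (Fin 2) (Fin 2) ℝ) (hX : X.det = 1) :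
    (∃ K : Matrix (Fin 2) (Fin 2) ℝ, K * Kᵀ = 1 ∧ K.det = 1 ∧ K * X * Kᵀ = X⁻¹) ↔
    Xᵀ = X := by
  have hinv : X⁻¹ = !![X 1 1, -X 0 1; -X 1 0, X 0 0] := by
    rw [Matrix.inv_def, Matrix.adjugate_fin_two, hX]
    simp
  constructor
  · rintro ⟨K, hK1, hKd, hK3⟩
    have hd : K 0 0 * K 1 1 - K 0 1 * K 1 0 = 1 := by
      rw [Matrix.det_fin_two] at hKd; linarith
    have h1 := congrFun (congrFun hK3 0) 1
    have h2 := congrFun (congrFun hK3 1) 0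
    simp [hinv, Matrix.mul_apply, Fin.sum_univ_two, Matrix.transpose_apply] at h1 h2
    have hsym : X 1 0 = X 0 1 := by nlinarith [h1, h2, hd]
    ext i j
    fin_cases i <;> fin_cases j <;>
      simp [Matrix.transpose_apply, hsym]
  · intro hsym
    have hs : X 1 0 = X 0 1 := by
      have := congrFun (congrFun hsym 0) 1
      simpa [Matrix.transpose_apply] using this
    have ht : (!![0, 1; -1, 0] : Matrix (Fin 2) (Fin 2) ℝ)ᵀ = !![0, -1; 1, 0] := by
      ext i j
      fin_cases i <;> fin_cases j <;> simp
    refine ⟨!![0, 1; -1, 0], ?_, ?_, ?_⟩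
    · rw [ht]
      norm_num [Matrix.mul_fin_two, ← Matrix.one_fin_two]
    · simp [Matrix.det_fin_two]
    · rw [hinv, ht, Matrix.eta_fin_two X]
      norm_num [Matrix.mul_fin_two, hs]
end

section
/- Let [α] be a real 3×3 matrix and C its cofactor matrix. If [α] = I₁₂ C I₁₂ where I₁₂ = diag(−1,1,1), and [α] is invertible, then det([α]) = 1 and [α]ᵀ I₁₂ [α] = I₁₂; i.e., [α] ∈ SO(1,2). -/
open Matrix

theorem stmt_15 (α : Matrix (Fin 3) (Fin 3) ℝ)
    (hinv : IsUnit α.det)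
    (I₁₂ : Matrix (Fin 3) (Fin 3) ℝ)
    (hI : I₁₂ = Matrix.diagonal ![-1, 1, 1])
    (hC : α = I₁₂ * (α.adjugate)ᵀ * I₁₂) :
    α.det = 1 ∧ αᵀ * I₁₂ * α = I₁₂ := by
  have hIdet : I₁₂.det = -1 := by
    simp [hI, Fin.prod_univ_three]
  have hI2 : I₁₂ * I₁₂ = 1 := by
    subst hI
    ext i j
    fin_cases i <;> fin_cases j <;>
      simp [Matrix.mul_apply, Fin.sum_univ_succ, Matrix.one_apply]
  have hIT : I₁₂ᵀ = I₁₂ := by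
    simp [hI, Matrix.diagonal_transpose]
  have hne : α.det ≠ 0 := hinv.ne_zero
  have hdet : α.det = 1 := by
    have h1 : α.det = α.det ^ 2 := by
      conv_lhs => rw [hC]
      rw [Matrix.det_mul, Matrix.det_mul, hIdet, Matrix.det_transpose,
        Matrix.det_adjugate]
      simp
    have : α.det * (α.det - 1) = 0 := by nlinarith [h1]
    rcases mul_eq_zero.1 this with h | h
    · exact absurd h hne
    · linarith
  refine ⟨hdet, ?_⟩
  have hT : αᵀ = I₁₂ * α.adjugate * I₁₂ := by
    conv_lhs => rw [hC]
    rw [Matrix.transpose_mul, Matrix.transpose_mul, hIT, Matrix.transpose_transpose,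
      Matrix.mul_assoc]
  rw [hT]
  have : α.adjugate * α = 1 := by
    rw [Matrix.adjugate_mul, hdet, one_smul]
  calc I₁₂ * α.adjugate * I₁₂ * I₁₂ * α
      = I₁₂ * α.adjugate * (I₁₂ * I₁₂) * α := by
        simp only [Matrix.mul_assoc]
    _ = I₁₂ * (α.adjugate * α) := by rw [hI2, mul_one, Matrix.mul_assoc]
    _ = I₁₂ := by rw [this, mul_one]
end
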